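/- Let x ∈ V be a non-terminal of a finite connected weighted graph G with terminal set T and values v₀ : T → ℝ. Among terminal paths through x, the maximum gradient equals the maximum over pairs s, t ∈ T of (v₀(s) − v₀(t))/(dist(s,x) + dist(x,t)), where dist is the shortest-path metric; i.e., a steepest terminal path through x consists of shortest paths from x to its two endpoint terminals. -/

import Mathlib

/-- Total length of a walk in a graph with edge lengths `ℓ`. -/
noncomputable def walkLen {V : Type*} (ℓ : Sym2 V → ℝ) {G : SimpleGraph V} {u v : V}
    (p : G.Walk u v) : ℝ :=
  (p.darts.map fun d => ℓ d.edge).sum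

/-- Shortest-path distance induced by edge lengths `ℓ`. -/
noncomputable def gdist {V : Type*} (G : SimpleGraph V) (ℓ : Sym2 V → ℝ) (u v : V) : ℝ :=
  sInf {x | ∃ p : G.Walk u v, walkLen ℓ p = x}

/-- Absolute gradient `|v x - v y| / ℓ(x,y)` of `v` on the unordered pair `e`. -/
noncomputable def absGrad {V : Type*} (ℓ : Sym2 V → ℝ) (v : V → ℝ) (e : Sym2 V) : ℝ :=
  Sym2.lift ⟨fun x y => |v x - v y|, fun x y => abs_sub_comm (v x) (v y)⟩ e / ℓ e

/-- The absolute edge gradients of `v`, sorted in decreasing order. -/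
noncomputable def gradList {V : Type*} [Fintype V] [DecidableEq V] (G : SimpleGraph V)
    [DecidableRel G.Adj] (ℓ : Sym2 V → ℝ) (v : V → ℝ) : List ℝ :=
  (G.edgeFinset.val.map (absGrad ℓ v)).sort (· ≥ ·)

/-!
Cutting a terminal path `P` from `s` to `t` at `x` gives `dist(s,x) + dist(x,t) ≤ ℓ(P)`, so the
gradient of `P` is at most the pair value of `(s, t)` when `v₀ s ≥ v₀ t`, and at most the pair
value `0` of `(s, s)` otherwise. Conversely, concatenating shortest walks `s → x → t` realises the
pair value of `(s, t)` as the gradient of a terminal path through `x`.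
-/

section WalkLength

variable {V : Type*} {G : SimpleGraph V} {ℓ : Sym2 V → ℝ}

lemma walkLen_append {u v w : V} (p : G.Walk u v) (q : G.Walk v w) :
    walkLen ℓ (p.append q) = walkLen ℓ p + walkLen ℓ q := by
  simp [walkLen, SimpleGraph.Walk.darts_append]

variable (hℓ : ∀ e ∈ G.edgeSet, 0 < ℓ e)
include hℓ

lemma dart_lengths_nonneg {u v : V} (p : G.Walk u v) :
    ∀ a ∈ p.darts.map fun d => ℓ d.edge, 0 ≤ a := by
  intro a ha
  obtain ⟨d, hd, rfl⟩ := List.mem_map.1 ha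
  exact (hℓ d.edge (p.edges_subset_edgeSet (List.mem_map_of_mem hd))).le

lemma walkLen_nonneg {u v : V} (p : G.Walk u v) : 0 ≤ walkLen ℓ p :=
  List.sum_nonneg (dart_lengths_nonneg hℓ p)

lemma walkLen_pos {u v : V} (huv : u ≠ v) (p : G.Walk u v) : 0 < walkLen ℓ p := by
  cases p with
  | nil => exact absurd rfl huv
  | cons h q =>
    have hedge : 0 < ℓ s(u, _) := hℓ _ h
    have hrest := walkLen_nonneg hℓ q
    simp only [walkLen, SimpleGraph.Walk.darts_cons, List.map_cons, List.sum_cons] at hrest ⊢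
    exact add_pos_of_pos_of_nonneg hedge hrest

lemma walkLen_bypass_le [DecidableEq V] {u v : V} (p : G.Walk u v) :
    walkLen ℓ p.bypass ≤ walkLen ℓ p :=
  (p.darts_bypass_sublist_darts.map _).sum_le_sum (dart_lengths_nonneg hℓ p)

lemma gdist_le_walkLen {u v : V} (p : G.Walk u v) : gdist G ℓ u v ≤ walkLen ℓ p :=
  csInf_le ⟨0, by rintro _ ⟨q, rfl⟩; exact walkLen_nonneg hℓ q⟩ ⟨p, rfl⟩

lemma gdist_add_gdist_le_walkLen {u v x : V} (p : G.Walk u v) (hx : x ∈ p.support) :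
    gdist G ℓ u x + gdist G ℓ x v ≤ walkLen ℓ p := by
  classical
  conv_rhs => rw [← p.take_spec hx, walkLen_append]
  exact add_le_add (gdist_le_walkLen hℓ _) (gdist_le_walkLen hℓ _)

lemma exists_walkLen_eq_gdist [Fintype V] {u v : V} (huv : G.Reachable u v) :
    ∃ p : G.Walk u v, walkLen ℓ p = gdist G ℓ u v := by
  classical
  have : Nonempty {p : G.Walk u v // p.length < Fintype.card V} :=
    huv.elim fun p => ⟨⟨p.bypass, p.bypass_isPath.length_lt⟩⟩
  obtain ⟨⟨p, _⟩, hp⟩ := Finite.exists_min fun p : {p : G.Walk u v // p.length < Fintype.card V} =>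
    walkLen ℓ p.1
  refine ⟨p, le_antisymm (le_csInf ⟨_, p, rfl⟩ ?_) (gdist_le_walkLen hℓ p)⟩
  rintro _ ⟨q, rfl⟩
  exact (hp ⟨q.bypass, q.bypass_isPath.length_lt⟩).trans (walkLen_bypass_le hℓ q)

lemma gdist_pos [Fintype V] {u v : V} (huv : G.Reachable u v) (hne : u ≠ v) :
    0 < gdist G ℓ u v := by
  obtain ⟨p, hp⟩ := exists_walkLen_eq_gdist hℓ huv
  exact hp ▸ walkLen_pos hℓ hne p

end WalkLength

theorem vertex_steepest_path_general {V : Type*} [Fintype V] (G : SimpleGraph V) (hG : G.Connected)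
    (ℓ : Sym2 V → ℝ) (hℓ : ∀ e ∈ G.edgeSet, 0 < ℓ e)
    (T : Set V) (v₀ : V → ℝ) (x : V) (hx : x ∉ T) :
    sSup {g : ℝ | ∃ s ∈ T, ∃ t ∈ T, ∃ p : G.Walk s t,
        x ∈ p.support ∧ g = (v₀ s - v₀ t) / walkLen ℓ p} =
      sSup {g : ℝ | ∃ s ∈ T, ∃ t ∈ T,
        g = (v₀ s - v₀ t) / (gdist G ℓ s x + gdist G ℓ x t)} := by
  refine csSup_eq_csSup_of_forall_exists_le ?_ ?_
  · rintro _ ⟨s, hs, t, ht, p, hxp, rfl⟩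
    rcases le_or_gt (v₀ s - v₀ t) 0 with hdrop | hdrop
    · exact ⟨0, ⟨s, hs, s, hs, by simp⟩, div_nonpos_of_nonpos_of_nonneg hdrop (walkLen_nonneg hℓ p)⟩
    · have hsx := gdist_pos hℓ (hG.preconnected s x) (ne_of_mem_of_not_mem hs hx)
      have hxt := gdist_pos hℓ (hG.preconnected x t) (ne_of_mem_of_not_mem ht hx).symm
      exact ⟨_, ⟨s, hs, t, ht, rfl⟩, div_le_div_of_nonneg_left hdrop.le (add_pos hsx hxt)
        (gdist_add_gdist_le_walkLen hℓ p hxp)⟩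
  · rintro _ ⟨s, hs, t, ht, rfl⟩
    obtain ⟨q₁, hq₁⟩ := exists_walkLen_eq_gdist hℓ (hG.preconnected s x)
    obtain ⟨q₂, hq₂⟩ := exists_walkLen_eq_gdist hℓ (hG.preconnected x t)
    exact ⟨_, ⟨s, hs, t, ht, q₁.append q₂, by simp, by rw [walkLen_append, hq₁, hq₂]⟩, le_rfl⟩

/-- The steepest gradient over terminal paths through a non-terminal `x` equals the
maximum over terminal pairs `(s, t)` of `(v₀ s − v₀ t)/(dist(s,x) + dist(x,t))`. -/
theorem vertex_steepest_path {V : Type*} [Fintype V] (G : SimpleGraph V) (hG : G.Connected)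
    (ℓ : Sym2 V → ℝ) (hℓ : ∀ e ∈ G.edgeSet, 0 < ℓ e)
    (T : Set V) (hT : T.Nonempty) (v₀ : V → ℝ) (x : V) (hx : x ∉ T) :
    sSup {g : ℝ | ∃ s ∈ T, ∃ t ∈ T, ∃ p : G.Walk s t,
        x ∈ p.support ∧ g = (v₀ s - v₀ t) / walkLen ℓ p} =
      sSup {g : ℝ | ∃ s ∈ T, ∃ t ∈ T,
        g = (v₀ s - v₀ t) / (gdist G ℓ s x + gdist G ℓ x t)} :=
  vertex_steepest_path_general G hG ℓ hℓ T v₀ x hx
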